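/- arXiv:2408.03955 — 2 statements merged into one kernel-verified Lean document; each statement's English description precedes it below -/
import Mathlib

section
/- Let φ = (1+√5)/2 and let k, n be positive integers with φ·k < n. Then there exists an integer r with k/φ < r < φ·k such that n ≡ r (mod k), and moreover n ≠ r. -/
/-! Since `φ - 1/φ = 1`, the open window `(k/φ, φk)` has length exactly `k`, and its endpoints
are irrational, so it contains a representative of every residue class mod `k`. That
representative lies below `φk < n`, so it is not `n` itself. -/

noncomputable def phi : ℝ := (1 + Real.sqrt 5) / 2

open Real goldenRatio

theorem phi_eq_goldenRatio : phi = φ := rfl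

theorem goldenRatio_mul_eq_div_add (x : ℝ) : φ * x = x / φ + x := by
  rw [div_eq_mul_inv, inv_goldenRatio, ← one_sub_goldenRatio]
  ring

theorem Int.exists_modEq_mem_Ioo {α : Type*} [Field α] [LinearOrder α] [IsStrictOrderedRing α]
    [FloorRing α] {a : α} (ha : ∀ m : ℤ, (m : α) ≠ a) {k : ℤ} (hk : 0 < k) (n : ℤ) :
    ∃ r : ℤ, n ≡ r [ZMOD k] ∧ a < r ∧ (r : α) < a + k := by
  refine ⟨⌈a⌉ + (n - ⌈a⌉) % k, ?_, ?_, ?_⟩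
  · simpa using ((Int.mod_modEq (n - ⌈a⌉) k).add_left ⌈a⌉).symm
  · have hceil : a < ⌈a⌉ := (Int.le_ceil a).lt_of_ne (ha _).symm
    have hrem : (0 : α) ≤ ((n - ⌈a⌉) % k : ℤ) := by exact_mod_cast Int.emod_nonneg _ hk.ne'
    push_cast at hrem ⊢
    linarith
  · have hrem : (n - ⌈a⌉) % k + 1 ≤ k := Int.emod_lt_of_pos _ hk
    have hceil : (⌈a⌉ : α) < a + 1 := Int.ceil_lt_add_one a
    have : ((⌈a⌉ + (n - ⌈a⌉) % k : ℤ) : α) + 1 ≤ ⌈a⌉ + k := by exact_mod_cast by omega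
    linarith

theorem exists_residue_in_losing_interval_general (k n : ℕ) (hk : 0 < k)
    (h : phi * k < n) :
    ∃ r : ℤ, (k : ℝ) / phi < (r : ℝ) ∧ (r : ℝ) < phi * k ∧
      (n : ℤ) ≡ r [ZMOD (k : ℤ)] ∧ (n : ℤ) ≠ r := by
  rw [phi_eq_goldenRatio] at h ⊢
  have hlower : ∀ m : ℤ, (m : ℝ) ≠ k / φ := fun m =>
    ((goldenRatio_irrational.natCast_div hk.ne').ne_int m).symm
  obtain ⟨r, hmod, hlo, hhi⟩ := Int.exists_modEq_mem_Ioo hlower (Int.natCast_pos.2 hk) n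
  have hhi : (r : ℝ) < φ * k := by
    rw [goldenRatio_mul_eq_div_add]
    exact_mod_cast hhi
  refine ⟨r, hlo, hhi, hmod, ?_⟩
  rintro rfl
  push_cast at hhi
  linarith

theorem exists_residue_in_losing_interval (k n : ℕ) (hk : 0 < k) (hn : 0 < n)
    (h : phi * k < n) :
    ∃ r : ℤ, (k : ℝ) / phi < (r : ℝ) ∧ (r : ℝ) < phi * k ∧
      (n : ℤ) ≡ r [ZMOD (k : ℤ)] ∧ (n : ℤ) ≠ r :=
  exists_residue_in_losing_interval_general k n hk h
end

section
/- Let φ = (1+√5)/2 and define L = {(k,n) ∈ ℤ² : 0 ≤ k, 0 ≤ n, k/φ < n < φ·k} ∪ {(0,0)} and W as its complement among pairs of non-negative integers. Then: (1) for every (k,n) ∈ W with (k,n) ≠ (0,0) and k ≤ n, either there is a legal move to a position in L; (2) from every (k,n) ∈ L with (k,n) ≠ (0,0), every legal move leads to a position in W; where a legal move from (a,b) with a ≤ b removes from one heap a positive multiple of a or of b (not exceeding that heap's size). -/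
/-- A legal move in the two-heaps game: from `p = (a, b)` one removes a positive
number of tokens that is a (positive) multiple of `a` or of `b` from one of the heaps. -/
def Move (p q : ℕ × ℕ) : Prop :=
  ∃ m : ℕ, 0 < m ∧
    ((0 < m * p.1 ∧ m * p.1 ≤ p.1 ∧ q = (p.1 - m * p.1, p.2)) ∨
     (0 < m * p.1 ∧ m * p.1 ≤ p.2 ∧ q = (p.1, p.2 - m * p.1)) ∨
     (0 < m * p.2 ∧ m * p.2 ≤ p.1 ∧ q = (p.1 - m * p.2, p.2)) ∨
     (0 < m * p.2 ∧ m * p.2 ≤ p.2 ∧ q = (p.1, p.2 - m * p.2)))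

theorem Move.sum_lt {p q : ℕ × ℕ} (h : Move p q) : q.1 + q.2 < p.1 + p.2 := by
  obtain ⟨m, hm, h⟩ := h
  rcases h with ⟨h1, h2, rfl⟩ | ⟨h1, h2, rfl⟩ | ⟨h1, h2, rfl⟩ | ⟨h1, h2, rfl⟩ <;> dsimp only <;> omega

/-- `Win p` holds iff the player to move from `p` wins: there is a legal move to a
position from which the player to move loses.  In particular `Win (0,0)` is false. -/
def Win (p : ℕ × ℕ) : Prop :=
  ∃ q, ∃ _ : Move p q, ¬ Win q
termination_by p.1 + p.2
decreasing_by exact Move.sum_lt ‹Move _ _›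

/-- The losing zone: `(0,0)` together with the positions `(k,n)` with `k/φ < n < φ·k`. -/
def Lzone (p : ℕ × ℕ) : Prop :=
  p = (0, 0) ∨ ((p.1 : ℝ) / phi < (p.2 : ℝ) ∧ (p.2 : ℝ) < phi * p.1)

/-- Normalization of an unordered pair of heaps. -/
def norm (p : ℕ × ℕ) : ℕ × ℕ := (min p.1 p.2, max p.1 p.2)

/-!
Since `φ - 1 = 1/φ`, the window `(k/φ, φk)` is an open interval of length exactly `k` whose ends
are irrational for `k > 0`, so it holds exactly one integer of each residue class mod `k`. From a
winning position `(k, n)` with `φk ≤ n` one therefore reduces `n` modulo `k` into the window.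
Conversely, from `(x, y)` with `x/φ < y < φx`, any move lowers one heap `x` either to `0` or by at
least the other heap `y`, and `x - y < φy - y = y/φ` leaves the window.
-/

open Real

lemma phi_pos : 0 < phi := goldenRatio_pos

lemma one_lt_phi : 1 < phi := one_lt_goldenRatio

lemma div_phi_add_self (x : ℝ) : x / phi + x = phi * x := by
  have h : phi ^ 2 = phi + 1 := goldenRatio_sq
  field_simp [phi_pos.ne']
  linear_combination (-x) * h

lemma div_phi_lt_iff {x y : ℝ} : x / phi < y ↔ x < phi * y := by
  rw [div_lt_iff₀ phi_pos, mul_comm]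

lemma lzone_iff {p : ℕ × ℕ} :
    Lzone p ↔ p = (0, 0) ∨ ((p.1 : ℝ) < phi * p.2 ∧ (p.2 : ℝ) < phi * p.1) := by
  rw [Lzone, div_phi_lt_iff]

lemma lzone_swap {a b : ℕ} : Lzone (b, a) ↔ Lzone (a, b) := by
  simp only [lzone_iff, Prod.mk.injEq]
  tauto

lemma lzone_norm (p : ℕ × ℕ) : Lzone (norm p) ↔ Lzone p := by
  rcases le_total p.1 p.2 with h | h
  · simp [_root_.norm, h]
  · simpa [_root_.norm, h] using lzone_swap

lemma not_lzone_of_lt_div_phi {a b : ℕ} (h : (b : ℝ) < a / phi) : ¬ Lzone (a, b) := by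
  have ha : a ≠ 0 := by
    rintro rfl
    rw [Nat.cast_zero, zero_div] at h
    exact (Nat.cast_nonneg b).not_gt h
  rintro (h0 | ⟨h1, -⟩)
  · exact ha (congrArg Prod.fst h0)
  · exact lt_asymm h h1

lemma sub_mul_lt_div_phi {x y a m : ℕ} (hxy : (x : ℝ) < phi * y) (hyx : (y : ℝ) < phi * x)
    (ha : a = x ∨ a = y) (hm : 0 < m) (hma : m * a ≤ x) : ((x - m * a : ℕ) : ℝ) < y / phi := by
  rcases ha with rfl | rfl
  · have hy : (0 : ℝ) < y := by nlinarith [phi_pos, (Nat.cast_nonneg a : (0 : ℝ) ≤ a)]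
    rw [Nat.sub_eq_zero_of_le (Nat.le_mul_of_pos_left a hm), Nat.cast_zero]
    exact div_pos hy phi_pos
  · calc ((x - m * a : ℕ) : ℝ) ≤ x - a := by
          rw [Nat.cast_sub hma, Nat.cast_mul]
          nlinarith [(Nat.one_le_cast (α := ℝ)).2 hm, Nat.cast_nonneg (α := ℝ) a]
      _ < phi * a - a := by linarith
      _ = a / phi := by linarith [div_phi_add_self a]

lemma not_lzone_of_move {p q : ℕ × ℕ} (hp : Lzone p) (hp0 : p ≠ (0, 0)) (hq : Move p q) :
    ¬ Lzone q := by
  obtain ⟨k, n⟩ := p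
  obtain ⟨hkn, hnk⟩ := (lzone_iff.1 hp).resolve_left hp0
  obtain ⟨m, hm, hq⟩ := hq
  rcases hq with ⟨-, hma, rfl⟩ | ⟨-, hma, rfl⟩ | ⟨-, hma, rfl⟩ | ⟨-, hma, rfl⟩
  · exact lzone_swap.not.1 <| not_lzone_of_lt_div_phi <|
      sub_mul_lt_div_phi hkn hnk (Or.inl rfl) hm hma
  · exact not_lzone_of_lt_div_phi <| sub_mul_lt_div_phi hnk hkn (Or.inr rfl) hm hma
  · exact lzone_swap.not.1 <| not_lzone_of_lt_div_phi <|
      sub_mul_lt_div_phi hkn hnk (Or.inr rfl) hm hma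
  · exact not_lzone_of_lt_div_phi <| sub_mul_lt_div_phi hnk hkn (Or.inl rfl) hm hma

lemma floor_div_phi_lt {k : ℕ} (hk : k ≠ 0) : (⌊(k : ℝ) / phi⌋₊ : ℝ) < k / phi :=
  (Nat.floor_le (div_nonneg k.cast_nonneg phi_pos.le)).lt_of_ne
    ((goldenRatio_irrational.natCast_div hk).ne_nat _).symm

lemma exists_sub_mul_lzone {k n : ℕ} (hk : k ≠ 0) (hn : phi * k ≤ n) :
    ∃ m, 0 < m ∧ m * k ≤ n ∧ Lzone (k, n - m * k) := by
  set f := ⌊(k : ℝ) / phi⌋₊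
  have hf : (f : ℝ) < k / phi := floor_div_phi_lt hk
  have hf1 : (k : ℝ) / phi < f + 1 := Nat.lt_floor_add_one _
  have hfkn : f + k < n := by
    exact_mod_cast (show (f + k : ℝ) < n by linarith [div_phi_add_self k])
  -- `n - m * k = f + 1 + r` with `r < k`: the representative of `n` in `[f + 1, f + k]`
  set m := (n - (f + 1)) / k
  set r := (n - (f + 1)) % k
  have hr : r < k := Nat.mod_lt _ (Nat.pos_of_ne_zero hk)
  have hdiv : k * m + r = n - (f + 1) := Nat.div_add_mod _ _
  have hm : 0 < m := Nat.div_pos (by omega) (Nat.pos_of_ne_zero hk)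
  have hsub : n - m * k = f + 1 + r := by rw [mul_comm]; omega
  refine ⟨m, hm, by rw [mul_comm]; omega, lzone_iff.2 (Or.inr ⟨?_, ?_⟩)⟩
  · rw [hsub, ← div_phi_lt_iff]
    push_cast
    linarith [(Nat.cast_nonneg r : (0 : ℝ) ≤ r)]
  · have hrk : (r : ℝ) + 1 ≤ k := by exact_mod_cast hr
    rw [hsub]
    push_cast
    linarith [div_phi_add_self k]

lemma exists_move_to_lzone {k n : ℕ} (hkn : k ≤ n) (h0 : (k, n) ≠ (0, 0)) (hW : ¬ Lzone (k, n)) :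
    ∃ q, Move (k, n) q ∧ Lzone q := by
  rcases Nat.eq_zero_or_pos k with rfl | hk
  · have hn : 0 < n := Nat.pos_of_ne_zero fun h => h0 (by rw [h])
    exact ⟨(0, 0), ⟨1, one_pos, .inr <| .inr <| .inr ⟨by simpa, by simp, by simp⟩⟩, .inl rfl⟩
  have hkn' : (k : ℝ) ≤ n := by exact_mod_cast hkn
  have hlow : (k : ℝ) < phi * n := by nlinarith [one_lt_phi, (Nat.cast_pos.2 hk : (0 : ℝ) < k)]
  have hn : phi * k ≤ n := by
    by_contra! h
    exact hW (lzone_iff.2 (.inr ⟨hlow, h⟩))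
  obtain ⟨m, hm, hmk, hL⟩ := exists_sub_mul_lzone hk.ne' hn
  exact ⟨_, ⟨m, hm, .inr <| .inl ⟨Nat.mul_pos hm hk, hmk, rfl⟩⟩, hL⟩

theorem W_to_L_and_L_to_W :
    (∀ k n : ℕ, k ≤ n → (k, n) ≠ (0, 0) → ¬ Lzone (k, n) →
      ∃ q, Move (k, n) q ∧ Lzone (norm q)) ∧
    (∀ k n : ℕ, Lzone (k, n) → (k, n) ≠ (0, 0) →
      ∀ q, Move (k, n) q → ¬ Lzone (norm q)) := by
  refine ⟨fun k n hkn h0 hW => ?_, fun k n hL h0 q hq => ?_⟩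
  · obtain ⟨q, hq, hL⟩ := exists_move_to_lzone hkn h0 hW
    exact ⟨q, hq, (lzone_norm q).2 hL⟩
  · rw [lzone_norm]
    exact not_lzone_of_move hL h0 hq
end
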